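/- arXiv:math/0610921 — 2 statements merged into one kernel-verified Lean document; each statement's English description precedes it below -/
import Mathlib

section
/- Let A be a ring with 1/2, Q ∈ A, and suppose u = (1+Q)/2 + ((1−Q)/2)z is a unit in the Laurent polynomial ring A[z,z⁻¹]. Define S ∈ A to be the coefficient of z⁰ in ((1+Q)/2 − ((1−Q)/2)z)·u⁻¹. Then S² = 1 and S commutes with Q. -/
/-!
Write `u = C a + C b * T 1` with `a = (1 + Q)/2`, `b = (1 - Q)/2` and `v = u⁻¹`. Comparing
coefficients in `u * v = 1 = v * u` gives `a vₙ + b vₙ₋₁ = δₙ₀ = vₙ a + vₙ₋₁ b`, so `x = a v₀` and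
`y = b v₋₁` satisfy `x + y = 1` and `S = x - y`. Running these recurrences out to where `v` vanishes
gives `v₀ bᴺ = 0` and `aᴺ v₋₁ = 0`; since `a + b = 1` this forces `v₀ b v₋₁ = 0`, so `x y = 0`,
`x` and `y` are complementary idempotents and `S² = 1`. Finally `C Q` commutes with `u`, hence
with `v` and with all its coefficients, hence with `S`.
-/

open LaurentPolynomial

lemma mul_eq_zero_of_add_eq_one {A : Type*} [Ring A] {p q : A} (hpq : p + q = 1) {m n : ℕ}
    {x y : A} (hx : x * q ^ m = 0) (hy : p ^ n * y = 0) : x * y = 0 := by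
  induction m generalizing x n y with
  | zero => rw [pow_zero, mul_one] at hx; rw [hx, zero_mul]
  | succ m ihm =>
    induction n generalizing y with
    | zero => rw [pow_zero, one_mul] at hy; rw [hy, mul_zero]
    | succ n ihn =>
      have hxp : x * (p * y) = 0 := ihn (by rwa [← mul_assoc, ← pow_succ])
      have hqy : x * q * y = 0 := ihm (by rwa [mul_assoc, ← pow_succ']) hy
      calc x * y = x * (p * y) + x * q * y := by
            rw [mul_assoc, ← mul_add, ← add_mul, hpq, one_mul]
        _ = 0 := by rw [hxp, hqy, add_zero]

lemma sub_sq_eq_one_of_add_eq_one_of_mul_eq_zero {A : Type*} [Ring A] {x y : A}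
    (hxy : x + y = 1) (hxy0 : x * y = 0) : (x - y) ^ 2 = 1 := by
  obtain rfl : y = 1 - x := eq_sub_of_add_eq' hxy
  calc (x - (1 - x)) ^ 2 = 1 - 4 * (x * (1 - x)) := by noncomm_ring
    _ = 1 := by rw [hxy0, mul_zero, sub_zero]

namespace LaurentPolynomial

variable {A : Type*} [Ring A]

lemma coeff_C_mul (r : A) (f : A[T;T⁻¹]) (n : ℤ) : (C r * f).coeff n = r * f.coeff n :=
  AddMonoidAlgebra.coeff_single_zero_mul f r n

lemma coeff_mul_C (r : A) (f : A[T;T⁻¹]) (n : ℤ) : (f * C r).coeff n = f.coeff n * r :=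
  AddMonoidAlgebra.coeff_mul_single_zero f r n

lemma coeff_C_mul_T_one_mul (r : A) (f : A[T;T⁻¹]) (n : ℤ) :
    (C r * T 1 * f).coeff n = r * f.coeff (n - 1) := by
  rw [← single_eq_C_mul_T, AddMonoidAlgebra.coeff_single_mul_apply, neg_add_eq_sub]

lemma coeff_mul_C_mul_T_one (r : A) (f : A[T;T⁻¹]) (n : ℤ) :
    (f * (C r * T 1)).coeff n = f.coeff (n - 1) * r := by
  rw [← single_eq_C_mul_T, AddMonoidAlgebra.coeff_mul_single_apply, sub_eq_add_neg]

lemma coeff_one (n : ℤ) : (1 : A[T;T⁻¹]).coeff n = if n = 0 then 1 else 0 := by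
  rw [← map_one C, C_apply]

lemma exists_coeff_eq_zero_of_le_natAbs (f : A[T;T⁻¹]) :
    ∃ N : ℕ, ∀ n : ℤ, N ≤ n.natAbs → f.coeff n = 0 := by
  refine ⟨f.coeff.support.sup Int.natAbs + 1, fun n hn => ?_⟩
  by_contra h
  have := Finset.le_sup (f := Int.natAbs) (Finsupp.mem_support_iff.mpr h)
  omega

lemma commute_coeff_of_commute_C {c : A} {f : A[T;T⁻¹]} (h : Commute (C c) f) (n : ℤ) :
    Commute c (f.coeff n) := by
  have := congr_arg (·.coeff n) h.eq
  rwa [coeff_C_mul, coeff_mul_C] at this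

variable {a b : A} {v : A[T;T⁻¹]}

lemma mul_coeff_add_mul_coeff_pred_of_mul_eq_one (h : (C a + C b * T 1) * v = 1) (n : ℤ) :
    a * v.coeff n + b * v.coeff (n - 1) = if n = 0 then 1 else 0 := by
  rw [← coeff_one, ← h, add_mul, AddMonoidAlgebra.coeff_add, Finsupp.add_apply, coeff_C_mul,
    coeff_C_mul_T_one_mul]

lemma coeff_mul_add_coeff_pred_mul_of_mul_eq_one (h : v * (C a + C b * T 1) = 1) (n : ℤ) :
    v.coeff n * a + v.coeff (n - 1) * b = if n = 0 then 1 else 0 := by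
  rw [← coeff_one, ← h, mul_add, AddMonoidAlgebra.coeff_add, Finsupp.add_apply, coeff_mul_C,
    coeff_mul_C_mul_T_one]

lemma neg_pow_mul_coeff_neg_one (hab : Commute a b) (h : (C a + C b * T 1) * v = 1) (m : ℕ) :
    (-a) ^ m * v.coeff (-1) = b ^ m * v.coeff (-1 - m) := by
  induction m with
  | zero => simp
  | succ m ih =>
    have hrec := mul_coeff_add_mul_coeff_pred_of_mul_eq_one h (-1 - m)
    rw [if_neg (by omega), add_eq_zero_iff_neg_eq, ← neg_mul] at hrec
    calc (-a) ^ (m + 1) * v.coeff (-1) = (-a) * ((-a) ^ m * v.coeff (-1)) := by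
          rw [pow_succ', mul_assoc]
      _ = b ^ m * ((-a) * v.coeff (-1 - m)) := by
          rw [ih, ← mul_assoc, ((hab.neg_left).pow_right m).eq, mul_assoc]
      _ = b ^ (m + 1) * v.coeff (-1 - (m + 1 : ℕ)) := by
          rw [hrec, ← mul_assoc, ← pow_succ]; push_cast; ring_nf

lemma coeff_zero_mul_neg_pow (hab : Commute a b) (h : v * (C a + C b * T 1) = 1) (m : ℕ) :
    v.coeff 0 * (-b) ^ m = v.coeff m * a ^ m := by
  induction m with
  | zero => simp
  | succ m ih =>
    have hrec := coeff_mul_add_coeff_pred_mul_of_mul_eq_one h (m + 1)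
    rw [if_neg (by omega), add_sub_cancel_right, add_eq_zero_iff_neg_eq', ← mul_neg] at hrec
    calc v.coeff 0 * (-b) ^ (m + 1) = v.coeff 0 * (-b) ^ m * (-b) := by
          rw [pow_succ, mul_assoc]
      _ = v.coeff m * (-b) * a ^ m := by
          rw [ih, mul_assoc, ((hab.neg_right).pow_left m).eq, mul_assoc]
      _ = v.coeff (m + 1 : ℕ) * a ^ (m + 1) := by
          rw [hrec, mul_assoc, ← pow_succ']; push_cast; rfl

lemma coeff_zero_mul_mul_coeff_neg_one (hab : Commute a b) (hab1 : a + b = 1)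
    (hr : (C a + C b * T 1) * v = 1) (hl : v * (C a + C b * T 1) = 1) :
    v.coeff 0 * (b * v.coeff (-1)) = 0 := by
  obtain ⟨N, hN⟩ := v.exists_coeff_eq_zero_of_le_natAbs
  have hN2 : Even (2 * N) := even_two_mul N
  have hv0 : v.coeff 0 * b ^ (2 * N) = 0 := by
    rw [← hN2.neg_pow, coeff_zero_mul_neg_pow hab hl, hN _ (by omega), zero_mul]
  have hv1 : a ^ (2 * N) * (b * v.coeff (-1)) = 0 := by
    rw [← mul_assoc, (hab.pow_left _).eq, mul_assoc, ← hN2.neg_pow,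
      neg_pow_mul_coeff_neg_one hab hr, hN (-1 - (2 * N : ℕ)) (by omega), mul_zero, mul_zero]
  exact mul_eq_zero_of_add_eq_one hab1 hv0 hv1

lemma coeff_zero_sub_C_mul_T_one_mul (v : A[T;T⁻¹]) :
    ((C a - C b * T 1) * v).coeff 0 = a * v.coeff 0 - b * v.coeff (-1) := by
  rw [sub_mul, AddMonoidAlgebra.coeff_sub, Finsupp.sub_apply, coeff_C_mul, coeff_C_mul_T_one_mul,
    zero_sub]

theorem sq_coeff_zero_sub_C_mul_T_one_mul_inv (hab1 : a + b = 1) (w : A[T;T⁻¹]ˣ)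
    (hw : (w : A[T;T⁻¹]) = C a + C b * T 1) :
    ((C a - C b * T 1) * (↑w⁻¹ : A[T;T⁻¹])).coeff 0 ^ 2 = 1 := by
  have hab : Commute a b := by
    rw [eq_sub_of_add_eq' hab1]; exact (Commute.one_right a).sub_right (Commute.refl a)
  have hr : (C a + C b * T 1) * (↑w⁻¹ : A[T;T⁻¹]) = 1 := hw ▸ w.mul_inv
  have hl : (↑w⁻¹ : A[T;T⁻¹]) * (C a + C b * T 1) = 1 := hw ▸ w.inv_mul
  rw [coeff_zero_sub_C_mul_T_one_mul]
  refine sub_sq_eq_one_of_add_eq_one_of_mul_eq_zero ?_ ?_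
  · simpa using mul_coeff_add_mul_coeff_pred_of_mul_eq_one hr 0
  · rw [mul_assoc, coeff_zero_mul_mul_coeff_neg_one hab hab1 hr hl, mul_zero]

theorem commute_coeff_zero_sub_C_mul_T_one_mul_inv {c : A} (hca : Commute c a) (hcb : Commute c b)
    (w : A[T;T⁻¹]ˣ) (hw : (w : A[T;T⁻¹]) = C a + C b * T 1) :
    Commute (((C a - C b * T 1) * (↑w⁻¹ : A[T;T⁻¹])).coeff 0) c := by
  have hcw : Commute (C c) (↑w⁻¹ : A[T;T⁻¹]) := by
    refine Commute.units_inv_right ?_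
    rw [hw]
    exact (hca.map C).add_right ((hcb.map C).mul_right (commute_T 1 (C c)).symm)
  rw [coeff_zero_sub_C_mul_T_one_mul]
  exact ((hca.mul_right (commute_coeff_of_commute_C hcw 0)).sub_right
    (hcb.mul_right (commute_coeff_of_commute_C hcw (-1)))).symm

end LaurentPolynomial

theorem stmt_7 (A : Type*) [Ring A] [Invertible (2 : A)] (Q : A)
    (hu : IsUnit (C (⅟2 * (1 + Q)) + C (⅟2 * (1 - Q)) * T 1))
    (S : A)
    (hS : S = (((C (⅟2 * (1 + Q)) - C (⅟2 * (1 - Q)) * T 1) *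
      ((hu.unit⁻¹ : (LaurentPolynomial A)ˣ) : LaurentPolynomial A) : LaurentPolynomial A).coeff : ℤ →₀ A) 0) :
    S ^ 2 = 1 ∧ Commute S Q := by
  have hsum : ⅟2 * (1 + Q) + ⅟2 * (1 - Q) = 1 := by
    rw [← mul_add, add_add_sub_cancel, one_add_one_eq_two, invOf_mul_self]
  have hQ2 : Commute Q ⅟2 := (Commute.ofNat_right Q 2).invOf_right
  subst hS
  exact ⟨sq_coeff_zero_sub_C_mul_T_one_mul_inv hsum hu.unit hu.unit_spec,
    commute_coeff_zero_sub_C_mul_T_one_mul_inv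
      (hQ2.mul_right ((Commute.one_right Q).add_right (Commute.refl Q)))
      (hQ2.mul_right ((Commute.one_right Q).sub_right (Commute.refl Q))) hu.unit hu.unit_spec⟩
end

section
/- Let A be any ring, T ∈ A, and suppose u = 1 + (z − 2 + z⁻¹)·T is a unit in A[z,z⁻¹]. Define F ∈ A as the coefficient of z⁰ in ((1+z)·T)·u⁻¹. Then F·(1−F) = T and F commutes with T. -/
/-!
Everything commuting with `t` commutes with `u`, hence with `u⁻¹`, so the coefficients `g n` of
`G = (1 + z) t u⁻¹` lie in the bicommutant of `t`, a commutative ring. Comparing coefficients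
in `u G = (1 + z) t` gives `g n + t (g (n+1) - 2 g n + g (n-1)) = t [n = 0] + t [n = 1]`, and
`z ↦ z⁻¹` fixes `u`, whence `g 0 = g 1`. For `n ≥ 2` the recurrence is homogeneous and conserves
the quadratic form `t x² - (2t - 1) x y + t y²` on consecutive pairs; since `G` has finite support
this form vanishes, while at `(g 1, g 2)` it equals `t - g 0 (1 - g 0)`.
-/

open LaurentPolynomial
open scoped IsMulCommutative

section QuadraticInvariant

variable {R : Type*} [CommRing R]

def quadInvariant (t x y : R) : R := t * x ^ 2 - (2 * t - 1) * x * y + t * y ^ 2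

lemma quadInvariant_eq_of_recurrence {t x y z : R} (h : y + t * (z - y - (y - x)) = 0) :
    quadInvariant t y z = quadInvariant t x y := by
  unfold quadInvariant
  linear_combination (z - x) * h

lemma mul_one_sub_eq_of_recurrence {t : R} {b : ℕ → R}
    (h₀ : b 0 + t * (b 1 - b 0) = t)
    (hrec : ∀ k, b (k + 1) + t * (b (k + 2) - b (k + 1) - (b (k + 1) - b k)) = 0)
    {N : ℕ} (hN : b N = 0) (hN' : b (N + 1) = 0) :
    b 0 * (1 - b 0) = t := by
  have hconst : ∀ k, quadInvariant t (b k) (b (k + 1)) = quadInvariant t (b 0) (b 1) := by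
    intro k
    induction k with
    | zero => rfl
    | succ k ih => rw [quadInvariant_eq_of_recurrence (hrec k), ih]
  have hzero : quadInvariant t (b 0) (b 1) = 0 := by
    rw [← hconst N, hN, hN']
    simp [quadInvariant]
  unfold quadInvariant at hzero
  linear_combination (b 1 + 1 - b 0) * h₀ - hzero

end QuadraticInvariant

namespace LaurentPolynomial

variable {A : Type*} [Ring A]

lemma coeff_C_mul_s14 (x : A) (p : LaurentPolynomial A) (n : ℤ) :
    (C x * p).coeff n = x * p.coeff n :=
  AddMonoidAlgebra.coeff_single_zero_mul p x n

lemma coeff_mul_C_s14 (p : LaurentPolynomial A) (x : A) (n : ℤ) :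
    (p * C x).coeff n = p.coeff n * x :=
  AddMonoidAlgebra.coeff_mul_single_zero p x n

lemma coeff_T_mul (k : ℤ) (p : LaurentPolynomial A) (n : ℤ) :
    (T k * p).coeff n = p.coeff (n - k) := by
  simpa [neg_add_eq_sub] using AddMonoidAlgebra.coeff_single_mul_apply p (1 : A) k n

lemma commute_coeff_of_commute_C_s14 {x : A} {p : LaurentPolynomial A} (h : Commute (C x) p)
    (n : ℤ) :
    Commute x (p.coeff n) := by
  rw [Commute, SemiconjBy, ← coeff_C_mul_s14, h.eq, coeff_mul_C_s14]

lemma exists_coeff_eq_zero_of_le (p : LaurentPolynomial A) :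
    ∃ N : ℤ, ∀ n, N ≤ n → p.coeff n = 0 := by
  obtain ⟨B, hB⟩ := p.coeff.support.bddAbove
  refine ⟨B + 1, fun n hn => Finsupp.notMem_support_iff.mp fun hmem => ?_⟩
  have := hB hmem
  omega

lemma coeff_one_add_laplacian_mul (t : A) (p : LaurentPolynomial A) (n : ℤ) :
    ((1 + (T 1 - 2 + T (-1)) * C t) * p).coeff n
      = p.coeff n + t * (p.coeff (n + 1) - p.coeff n - (p.coeff n - p.coeff (n - 1))) := by
  have h : (1 + (T 1 - 2 + T (-1)) * C t) * p
      = p + (T 1 * (C t * p) - (C t * p + C t * p) + T (-1) * (C t * p)) := by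
    noncomm_ring
  simp only [h, AddMonoidAlgebra.coeff_add, AddMonoidAlgebra.coeff_sub, Finsupp.add_apply,
    Finsupp.sub_apply, coeff_T_mul, coeff_C_mul_s14, sub_neg_eq_add]
  noncomm_ring

lemma coeff_one_add_T_mul_C (t : A) (n : ℤ) :
    ((1 + T 1) * C t : LaurentPolynomial A).coeff n
      = (if n = 0 then t else 0) + (if n = 1 then t else 0) := by
  simp only [add_mul, one_mul, AddMonoidAlgebra.coeff_add, Finsupp.add_apply, coeff_T_mul, C_apply,
    sub_eq_zero]

/-- `z ↦ z⁻¹`; `LaurentPolynomial.invert` is only available over commutative coefficient rings. -/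
noncomputable def invertRingEquiv (A : Type*) [Ring A] :
    LaurentPolynomial A ≃+* LaurentPolynomial A :=
  (AddMonoidAlgebra.domCongr ℤ A (AddEquiv.neg ℤ)).toRingEquiv

lemma coeff_invertRingEquiv (p : LaurentPolynomial A) (n : ℤ) :
    (invertRingEquiv A p).coeff n = p.coeff (-n) :=
  AddMonoidAlgebra.coeff_domCongr (R := ℤ) _ _ _

@[simp] lemma invertRingEquiv_T (k : ℤ) : invertRingEquiv A (T k) = T (-k) :=
  AddMonoidAlgebra.domCongr_single (R := ℤ) _ _ _

@[simp] lemma invertRingEquiv_C (x : A) : invertRingEquiv A (C x) = C x :=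
  AddMonoidAlgebra.domCongr_single (R := ℤ) _ _ _

end LaurentPolynomial

section FSquareRoot

variable {A : Type*} [Ring A]

lemma commute_C_one_add_laplacian_mul_C {x t : A} (h : Commute x t) :
    Commute (C x) (1 + (T 1 - 2 + T (-1)) * C t : LaurentPolynomial A) := by
  refine (Commute.one_right _).add_right (Commute.mul_right ?_ ?_)
  · exact ((commute_T 1 (C x)).symm.sub_right (Commute.ofNat_right _ 2)).add_right
      (commute_T (-1) (C x)).symm
  · exact h.map C

noncomputable def fSqrtSeries (t : A) (u : (LaurentPolynomial A)ˣ) : LaurentPolynomial A :=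
  (1 + T 1) * C t * ((u⁻¹ : (LaurentPolynomial A)ˣ) : LaurentPolynomial A)

variable {t : A} {u : (LaurentPolynomial A)ˣ}
  (hu : (u : LaurentPolynomial A) = 1 + (T 1 - 2 + T (-1)) * C t)
include hu

lemma coeff_fSqrtSeries_mem_centralizer_centralizer (n : ℤ) :
    (fSqrtSeries t u).coeff n ∈ Set.centralizer (Set.centralizer {t}) := by
  intro x hx
  have hxt : Commute x t := (Set.mem_centralizer_iff.mp hx t rfl).symm
  have hxu : Commute (C x) ((u⁻¹ : (LaurentPolynomial A)ˣ) : LaurentPolynomial A) :=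
    (hu ▸ commute_C_one_add_laplacian_mul_C hxt).units_inv_right
  have : Commute (C x) (fSqrtSeries t u) :=
    (((Commute.one_right _).add_right (commute_T 1 (C x)).symm).mul_right (hxt.map C)).mul_right hxu
  exact (commute_coeff_of_commute_C_s14 this n).eq

lemma units_mul_fSqrtSeries : (u : LaurentPolynomial A) * fSqrtSeries t u = (1 + T 1) * C t := by
  have h : Commute ((1 + T 1) * C t) (u : LaurentPolynomial A) :=
    ((Commute.one_left _).add_left (commute_T 1 _)).mul_left
      (hu ▸ commute_C_one_add_laplacian_mul_C (Commute.refl t))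
  rw [fSqrtSeries, ← mul_assoc, ← h.eq, mul_assoc, Units.mul_inv, mul_one]

lemma coeff_fSqrtSeries_recurrence (n : ℤ) :
    (fSqrtSeries t u).coeff n + t * ((fSqrtSeries t u).coeff (n + 1) - (fSqrtSeries t u).coeff n
      - ((fSqrtSeries t u).coeff n - (fSqrtSeries t u).coeff (n - 1)))
      = ((1 + T 1) * C t : LaurentPolynomial A).coeff n := by
  rw [← units_mul_fSqrtSeries hu, hu, coeff_one_add_laplacian_mul]

lemma invertRingEquiv_fSqrtSeries :
    invertRingEquiv A (fSqrtSeries t u) = T (-1) * fSqrtSeries t u := by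
  have hfix : invertRingEquiv A u = u := by
    rw [hu]
    simp only [map_add, map_one, map_mul, map_sub, map_ofNat, invertRingEquiv_T, invertRingEquiv_C,
      neg_neg]
    abel_nf
  have hinv : invertRingEquiv A ((u⁻¹ : (LaurentPolynomial A)ˣ) : LaurentPolynomial A) = ↑u⁻¹ :=
    (Units.inv_eq_of_mul_eq_one_right (by rw [← hfix, ← map_mul, Units.mul_inv, map_one])).symm
  rw [fSqrtSeries, map_mul, map_mul, hinv, map_add, map_one, invertRingEquiv_T, invertRingEquiv_C,
    ← mul_assoc, ← mul_assoc, mul_add, mul_one, ← T_add]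
  simp [add_comm]

lemma coeff_fSqrtSeries_one : (fSqrtSeries t u).coeff 1 = (fSqrtSeries t u).coeff 0 := by
  have h := congrArg (fun p : LaurentPolynomial A => p.coeff 0)
    (invertRingEquiv_fSqrtSeries hu)
  simp only [coeff_invertRingEquiv, coeff_T_mul, neg_zero, zero_sub, neg_neg] at h
  exact h.symm

lemma coeff_fSqrtSeries_mul_one_sub :
    (fSqrtSeries t u).coeff 0 * (1 - (fSqrtSeries t u).coeff 0) = t := by
  let B := Subring.centralizer (Set.centralizer {t})
  have : IsMulCommutative B :=
    .of_setLike_mul_comm (Set.centralizer_centralizer_comm_of_comm (by simp))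
  let t' : B := ⟨t, Set.subset_centralizer_centralizer rfl⟩
  let b : ℕ → B := fun k => ⟨(fSqrtSeries t u).coeff (k + 1),
    coeff_fSqrtSeries_mem_centralizer_centralizer hu _⟩
  have h₀ : b 0 + t' * (b 1 - b 0) = t' := by
    have h := coeff_fSqrtSeries_recurrence hu 1
    rw [sub_self, ← coeff_fSqrtSeries_one hu, sub_self, sub_zero, coeff_one_add_T_mul_C] at h
    ext
    simpa [b, t', one_add_one_eq_two] using h
  have hrec : ∀ k, b (k + 1) + t' * (b (k + 2) - b (k + 1) - (b (k + 1) - b k)) = 0 := by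
    intro k
    have h := coeff_fSqrtSeries_recurrence hu (k + 2)
    rw [coeff_one_add_T_mul_C, if_neg (by omega), if_neg (by omega), add_zero,
      show (k + 2 - 1 : ℤ) = k + 1 by ring] at h
    ext
    simpa [b, t', add_assoc] using h
  obtain ⟨N, hN⟩ := exists_coeff_eq_zero_of_le (fSqrtSeries t u)
  have key := mul_one_sub_eq_of_recurrence h₀ hrec (N := N.toNat)
    (Subtype.ext (hN _ (by omega))) (Subtype.ext (hN _ (by omega)))
  simpa [b, t', coeff_fSqrtSeries_one hu] using congrArg Subtype.val key

end FSquareRoot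

theorem stmt_14 (A : Type*) [Ring A] (t : A)
    (hu : IsUnit ((1 : LaurentPolynomial A) + (T 1 - 2 + T (-1)) * C t))
    (F : A)
    (hF : F = ((AddMonoidAlgebra.coeff ((1 + T 1) * C t *
      ((hu.unit⁻¹ : (LaurentPolynomial A)ˣ) : LaurentPolynomial A) :
      LaurentPolynomial A) : ℤ →₀ A) 0)) :
    F * (1 - F) = t ∧ Commute F t := by
  have ht : t ∈ Set.centralizer {t} := by simp [Set.mem_centralizer_iff]
  subst hF
  exact ⟨coeff_fSqrtSeries_mul_one_sub hu.unit_spec,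
    (coeff_fSqrtSeries_mem_centralizer_centralizer hu.unit_spec 0 t ht).symm⟩
end
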